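/- arXiv:1911.06911 — 3 statements merged into one kernel-verified Lean document; each statement's English description precedes it below -/
import Mathlib

section
/- Let d ≥ 1, and let α, β, s be real numbers with s ≤ α and 0 ≤ β. Let M, G_δ : ℝ^d → ℂ be measurable, set G(ξ) := ⟨ξ⟩^{-α} M(ξ), and suppose δ² := ∫_{ℝ^d} ⟨ξ⟩^{2s} |G_δ(ξ) − G(ξ)|² dξ < ∞ and ρ² := ∫_{ℝ^d} ⟨ξ⟩^{2β} |M(ξ)|² dξ < ∞. For a cutoff frequency ξ_c > 0 define the truncated reconstruction M_c(ξ) := ⟨ξ⟩^{α} G_δ(ξ) for |ξ| < ξ_c and M_c(ξ) := 0 for |ξ| ≥ ξ_c. Then (∫_{ℝ^d} |M(ξ) − M_c(ξ)|² dξ)^{1/2} ≤ ⟨ξ_c⟩^{α−s} δ + ⟨ξ_c⟩^{−β} ρ, where ⟨ξ_c⟩ := √(1 + ξ_c²). -/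
/-!
Split frequency space at `‖ξ‖ = ξc`. Below the cutoff `M - M_c = ⟨ξ⟩^α (G - G_δ)`, and
`⟨ξ⟩^{2α} ≤ ⟨ξc⟩^{2(α-s)} ⟨ξ⟩^{2s}` because `s ≤ α`; above it `M - M_c = M`, and
`1 ≤ ⟨ξc⟩^{-2β} ⟨ξ⟩^{2β}` because `β ≥ 0`. So `|M - M_c|²` is dominated pointwise by
`⟨ξc⟩^{2(α-s)}` times the `Hˢ` density of the noise plus `⟨ξc⟩^{-2β}` times the `H^β` density
of `M`; integrate and use `√(x + y) ≤ √x + √y`.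
-/

open MeasureTheory

lemma Real.sqrt_add_le_add_sqrt {x y : ℝ} (hx : 0 ≤ x) (hy : 0 ≤ y) : √(x + y) ≤ √x + √y := by
  rw [Real.sqrt_le_left (by positivity), add_sq, Real.sq_sqrt hx, Real.sq_sqrt hy]
  nlinarith [Real.sqrt_nonneg x, Real.sqrt_nonneg y]

lemma Real.sqrt_rpow_two_mul {c : ℝ} (hc : 0 ≤ c) (t : ℝ) : √(c ^ (2 * t)) = c ^ t := by
  rw [mul_comm, Real.rpow_mul hc, Real.rpow_two, Real.sqrt_sq (Real.rpow_nonneg hc t)]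

lemma Real.rpow_le_rpow_sub_mul_rpow_of_le {w c a b : ℝ} (hw : 0 < w) (hwc : w ≤ c) (hba : b ≤ a) :
    w ^ a ≤ c ^ (a - b) * w ^ b := by
  calc w ^ a = w ^ (a - b) * w ^ b := by rw [← Real.rpow_add hw, sub_add_cancel]
    _ ≤ c ^ (a - b) * w ^ b := by gcongr

lemma Real.rpow_le_rpow_sub_mul_rpow_of_ge {w c a b : ℝ} (hc : 0 < c) (hcw : c ≤ w) (hab : a ≤ b) :
    w ^ a ≤ c ^ (a - b) * w ^ b := by
  have hw : 0 < w := hc.trans_le hcw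
  calc w ^ a = w ^ (a - b) * w ^ b := by rw [← Real.rpow_add hw, sub_add_cancel]
    _ ≤ c ^ (a - b) * w ^ b := by
        have : w ^ (a - b) ≤ c ^ (a - b) := Real.rpow_le_rpow_of_nonpos hc hcw (by linarith)
        gcongr

lemma sqrt_integral_le_of_le_add {X : Type*} [MeasurableSpace X] {μ : Measure X}
    {f g h : X → ℝ} {a b : ℝ} (ha : 0 ≤ a) (hb : 0 ≤ b) (hf : 0 ≤ f) (hg : 0 ≤ g) (hh : 0 ≤ h)
    (hgi : Integrable g μ) (hhi : Integrable h μ) (hfgh : ∀ x, f x ≤ a * g x + b * h x) :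
    √(∫ x, f x ∂μ) ≤ √a * √(∫ x, g x ∂μ) + √b * √(∫ x, h x ∂μ) := by
  have hint : ∫ x, f x ∂μ ≤ a * ∫ x, g x ∂μ + b * ∫ x, h x ∂μ := by
    -- `f` need not be integrable: if it is not, its integral is `0`.
    calc ∫ x, f x ∂μ ≤ ∫ x, a * g x + b * h x ∂μ :=
          integral_mono_of_nonneg (ae_of_all _ hf) ((hgi.const_mul a).add (hhi.const_mul b))
            (ae_of_all _ hfgh)
      _ = a * ∫ x, g x ∂μ + b * ∫ x, h x ∂μ := by
          rw [integral_add (hgi.const_mul a) (hhi.const_mul b), integral_const_mul,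
            integral_const_mul]
  have hg0 : 0 ≤ ∫ x, g x ∂μ := integral_nonneg hg
  have hh0 : 0 ≤ ∫ x, h x ∂μ := integral_nonneg hh
  calc √(∫ x, f x ∂μ) ≤ √(a * ∫ x, g x ∂μ + b * ∫ x, h x ∂μ) := Real.sqrt_le_sqrt hint
    _ ≤ √(a * ∫ x, g x ∂μ) + √(b * ∫ x, h x ∂μ) :=
        Real.sqrt_add_le_add_sqrt (by positivity) (by positivity)
    _ = √a * √(∫ x, g x ∂μ) + √b * √(∫ x, h x ∂μ) := by
        rw [Real.sqrt_mul ha, Real.sqrt_mul hb]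

noncomputable def japaneseBracket (x : ℝ) : ℝ := √(1 + x ^ 2)

lemma japaneseBracket_pos (x : ℝ) : 0 < japaneseBracket x :=
  Real.sqrt_pos.mpr (by positivity)

lemma japaneseBracket_le_japaneseBracket {x y : ℝ} (hx : 0 ≤ x) (hxy : x ≤ y) :
    japaneseBracket x ≤ japaneseBracket y :=
  Real.sqrt_le_sqrt (by gcongr)

lemma norm_sub_rpow_mul_eq {w α : ℝ} (hw : 0 < w) (m g : ℂ) :
    ‖m - ((w ^ α : ℝ) : ℂ) * g‖ = w ^ α * ‖g - ((w ^ (-α) : ℝ) : ℂ) * m‖ := by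
  have hinv : ((w ^ α : ℝ) : ℂ) * ((w ^ (-α) : ℝ) : ℂ) = 1 := by
    rw [← Complex.ofReal_mul, ← Real.rpow_add hw, add_neg_cancel, Real.rpow_zero,
      Complex.ofReal_one]
  have : m - ((w ^ α : ℝ) : ℂ) * g = -(((w ^ α : ℝ) : ℂ) * (g - ((w ^ (-α) : ℝ) : ℂ) * m)) := by
    linear_combination (-m) * hinv
  rw [this, norm_neg, norm_mul, Complex.norm_real, Real.norm_of_nonneg (by positivity)]

lemma sq_norm_sub_truncatedInverse_le {α β s r R : ℝ} (hs : s ≤ α) (hβ : 0 ≤ β) (hr : 0 ≤ r)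
    (hR : 0 ≤ R) (m gδ : ℂ) :
    ‖m - if r < R then ((japaneseBracket r ^ α : ℝ) : ℂ) * gδ else 0‖ ^ 2 ≤
      japaneseBracket R ^ (2 * (α - s)) *
          (japaneseBracket r ^ (2 * s) * ‖gδ - ((japaneseBracket r ^ (-α) : ℝ) : ℂ) * m‖ ^ 2) +
        japaneseBracket R ^ (-(2 * β)) * (japaneseBracket r ^ (2 * β) * ‖m‖ ^ 2) := by
  have hw := japaneseBracket_pos r
  have hc := japaneseBracket_pos R
  split_ifs with hrR
  · have hwc : japaneseBracket r ^ (α * 2) ≤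
        japaneseBracket R ^ (2 * (α - s)) * japaneseBracket r ^ (2 * s) := by
      rw [mul_comm α, mul_sub]
      exact Real.rpow_le_rpow_sub_mul_rpow_of_le hw
        (japaneseBracket_le_japaneseBracket hr hrR.le) (by linarith)
    rw [norm_sub_rpow_mul_eq hw, mul_pow, ← Real.rpow_mul_natCast hw.le, Nat.cast_ofNat,
      ← mul_assoc]
    exact le_add_of_le_of_nonneg (by gcongr) (by positivity)
  · have hcw : 1 ≤ japaneseBracket R ^ (-(2 * β)) * japaneseBracket r ^ (2 * β) := by
      simpa using Real.rpow_le_rpow_sub_mul_rpow_of_ge hc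
        (japaneseBracket_le_japaneseBracket hR (not_lt.mp hrR)) (by linarith : 0 ≤ 2 * β)
    rw [sub_zero, ← mul_assoc (japaneseBracket R ^ (-(2 * β)))]
    exact le_add_of_nonneg_of_le (by positivity) (le_mul_of_one_le_left (by positivity) hcw)

theorem hs_inverse_matching_resolution_bound_general
    {d : ℕ} (α β s : ℝ) (hs : s ≤ α) (hβ : 0 ≤ β)
    (M Gδ : EuclideanSpace ℝ (Fin d) → ℂ)
    (G : EuclideanSpace ℝ (Fin d) → ℂ)
    (hG : ∀ ξ, G ξ = ((Real.sqrt (1 + ‖ξ‖ ^ 2) ^ (-α) : ℝ) : ℂ) * M ξ)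
    (δ ρ : ℝ) (hδ0 : 0 ≤ δ) (hρ0 : 0 ≤ ρ)
    (hδint : Integrable (fun ξ : EuclideanSpace ℝ (Fin d) =>
      Real.sqrt (1 + ‖ξ‖ ^ 2) ^ (2 * s) * ‖Gδ ξ - G ξ‖ ^ 2))
    (hδ : δ ^ 2 = ∫ ξ : EuclideanSpace ℝ (Fin d),
      Real.sqrt (1 + ‖ξ‖ ^ 2) ^ (2 * s) * ‖Gδ ξ - G ξ‖ ^ 2)
    (hρint : Integrable (fun ξ : EuclideanSpace ℝ (Fin d) =>
      Real.sqrt (1 + ‖ξ‖ ^ 2) ^ (2 * β) * ‖M ξ‖ ^ 2))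
    (hρ : ρ ^ 2 = ∫ ξ : EuclideanSpace ℝ (Fin d),
      Real.sqrt (1 + ‖ξ‖ ^ 2) ^ (2 * β) * ‖M ξ‖ ^ 2)
    (ξc : ℝ) (hξc : 0 < ξc)
    (Mc : EuclideanSpace ℝ (Fin d) → ℂ)
    (hMc : ∀ ξ, Mc ξ = if ‖ξ‖ < ξc then ((Real.sqrt (1 + ‖ξ‖ ^ 2) ^ α : ℝ) : ℂ) * Gδ ξ else 0) :
    Real.sqrt (∫ ξ : EuclideanSpace ℝ (Fin d), ‖M ξ - Mc ξ‖ ^ 2) ≤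
      Real.sqrt (1 + ξc ^ 2) ^ (α - s) * δ + Real.sqrt (1 + ξc ^ 2) ^ (-β) * ρ := by
  have hc : 0 ≤ Real.sqrt (1 + ξc ^ 2) := Real.sqrt_nonneg _
  have hpt : ∀ ξ, ‖M ξ - Mc ξ‖ ^ 2 ≤
      Real.sqrt (1 + ξc ^ 2) ^ (2 * (α - s)) *
          (Real.sqrt (1 + ‖ξ‖ ^ 2) ^ (2 * s) * ‖Gδ ξ - G ξ‖ ^ 2) +
        Real.sqrt (1 + ξc ^ 2) ^ (-(2 * β)) * (Real.sqrt (1 + ‖ξ‖ ^ 2) ^ (2 * β) * ‖M ξ‖ ^ 2) :=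
    fun ξ => by
      rw [hMc ξ, hG ξ]
      exact sq_norm_sub_truncatedInverse_le hs hβ (norm_nonneg ξ) hξc.le (M ξ) (Gδ ξ)
  calc Real.sqrt (∫ ξ, ‖M ξ - Mc ξ‖ ^ 2)
      ≤ √(Real.sqrt (1 + ξc ^ 2) ^ (2 * (α - s))) * √(δ ^ 2) +
          √(Real.sqrt (1 + ξc ^ 2) ^ (-(2 * β))) * √(ρ ^ 2) := by
        rw [hδ, hρ]
        exact sqrt_integral_le_of_le_add (by positivity) (by positivity) (fun _ => by positivity)
          (fun _ => by positivity) (fun _ => by positivity) hδint hρint hpt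
    _ = Real.sqrt (1 + ξc ^ 2) ^ (α - s) * δ + Real.sqrt (1 + ξc ^ 2) ^ (-β) * ρ := by
        rw [← mul_neg, Real.sqrt_rpow_two_mul hc, Real.sqrt_rpow_two_mul hc, Real.sqrt_sq hδ0,
          Real.sqrt_sq hρ0]

/-- **Resolution analysis for `Hˢ`-based inverse matching, Fourier domain.**
`⟨ξ⟩ := √(1+‖ξ‖²)`; `G = ⟨ξ⟩^{-α} M` is the exact datum, `G_δ` the noisy datum with
noise of size `δ` in the `Hˢ` norm, `M ∈ H^β` with norm `ρ`, and `M_c` the truncated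
reconstruction with cutoff `ξ_c`.  Then
`‖M - M_c‖_{L²} ≤ ⟨ξ_c⟩^{α-s} δ + ⟨ξ_c⟩^{-β} ρ`. -/
theorem hs_inverse_matching_resolution_bound
    {d : ℕ} (hd : 1 ≤ d) (α β s : ℝ) (hs : s ≤ α) (hβ : 0 ≤ β)
    (M Gδ : EuclideanSpace ℝ (Fin d) → ℂ) (hMmeas : Measurable M) (hGδmeas : Measurable Gδ)
    (G : EuclideanSpace ℝ (Fin d) → ℂ)
    (hG : ∀ ξ, G ξ = ((Real.sqrt (1 + ‖ξ‖ ^ 2) ^ (-α) : ℝ) : ℂ) * M ξ)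
    (δ ρ : ℝ) (hδ0 : 0 ≤ δ) (hρ0 : 0 ≤ ρ)
    (hδint : Integrable (fun ξ : EuclideanSpace ℝ (Fin d) =>
      Real.sqrt (1 + ‖ξ‖ ^ 2) ^ (2 * s) * ‖Gδ ξ - G ξ‖ ^ 2))
    (hδ : δ ^ 2 = ∫ ξ : EuclideanSpace ℝ (Fin d),
      Real.sqrt (1 + ‖ξ‖ ^ 2) ^ (2 * s) * ‖Gδ ξ - G ξ‖ ^ 2)
    (hρint : Integrable (fun ξ : EuclideanSpace ℝ (Fin d) =>
      Real.sqrt (1 + ‖ξ‖ ^ 2) ^ (2 * β) * ‖M ξ‖ ^ 2))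
    (hρ : ρ ^ 2 = ∫ ξ : EuclideanSpace ℝ (Fin d),
      Real.sqrt (1 + ‖ξ‖ ^ 2) ^ (2 * β) * ‖M ξ‖ ^ 2)
    (ξc : ℝ) (hξc : 0 < ξc)
    (Mc : EuclideanSpace ℝ (Fin d) → ℂ)
    (hMc : ∀ ξ, Mc ξ = if ‖ξ‖ < ξc then ((Real.sqrt (1 + ‖ξ‖ ^ 2) ^ α : ℝ) : ℂ) * Gδ ξ else 0) :
    Real.sqrt (∫ ξ : EuclideanSpace ℝ (Fin d), ‖M ξ - Mc ξ‖ ^ 2) ≤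
      Real.sqrt (1 + ξc ^ 2) ^ (α - s) * δ + Real.sqrt (1 + ξc ^ 2) ^ (-β) * ρ :=
  hs_inverse_matching_resolution_bound_general α β s hs hβ M Gδ G hG δ ρ hδ0 hρ0 hδint hδ hρint hρ
    ξc hξc Mc hMc
end

section
/- Let d ≥ 1, and let α, β, s be real numbers with s ≤ α and 0 < β. Let M, G_δ : ℝ^d → ℂ be measurable, set G(ξ) := ⟨ξ⟩^{-α} M(ξ), and suppose δ² := ∫_{ℝ^d} ⟨ξ⟩^{2s} |G_δ(ξ) − G(ξ)|² dξ < ∞ and ρ² := ∫_{ℝ^d} ⟨ξ⟩^{2β} |M(ξ)|² dξ < ∞, with 0 < δ ≤ ρ. Choose the cutoff ξ_c ≥ 0 so that ⟨ξ_c⟩ = (ρ/δ)^{1/(α+β−s)} (which is ≥ 1 since δ ≤ ρ), and define M_c(ξ) := ⟨ξ⟩^{α} G_δ(ξ) for |ξ| < ξ_c and M_c(ξ) := 0 for |ξ| ≥ ξ_c (with M_c ≡ 0 if ξ_c = 0). Then (∫_{ℝ^d} |M(ξ) − M_c(ξ)|² dξ)^{1/2} ≤ 2 ρ^{(α−s)/(α+β−s)}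 δ^{β/(α+β−s)}. -/
open MeasureTheory
open scoped ENNReal

/-- **Optimally tuned resolution estimate for `Hˢ`-based inverse matching.**
With noise level `δ` in the `Hˢ` norm, unknown `M` of size `ρ` in `H^β`, and the cutoff
chosen so that `⟨ξ_c⟩ = (ρ/δ)^{1/(α+β-s)}`, the reconstruction error satisfies
`‖M - M_c‖_{L²} ≤ 2 ρ^{(α-s)/(α+β-s)} δ^{β/(α+β-s)}`. -/
theorem hs_inverse_matching_optimal_resolution
    {d : ℕ} (hd : 1 ≤ d) (α β s : ℝ) (hs : s ≤ α) (hβ : 0 < β)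
    (M Gδ : EuclideanSpace ℝ (Fin d) → ℂ) (hMmeas : Measurable M) (hGδmeas : Measurable Gδ)
    (G : EuclideanSpace ℝ (Fin d) → ℂ)
    (hG : ∀ ξ, G ξ = ((Real.sqrt (1 + ‖ξ‖ ^ 2) ^ (-α) : ℝ) : ℂ) * M ξ)
    (δ ρ : ℝ) (hδ0 : 0 < δ) (hδρ : δ ≤ ρ)
    (hδint : Integrable (fun ξ : EuclideanSpace ℝ (Fin d) =>
      Real.sqrt (1 + ‖ξ‖ ^ 2) ^ (2 * s) * ‖Gδ ξ - G ξ‖ ^ 2))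
    (hδ : δ ^ 2 = ∫ ξ : EuclideanSpace ℝ (Fin d),
      Real.sqrt (1 + ‖ξ‖ ^ 2) ^ (2 * s) * ‖Gδ ξ - G ξ‖ ^ 2)
    (hρint : Integrable (fun ξ : EuclideanSpace ℝ (Fin d) =>
      Real.sqrt (1 + ‖ξ‖ ^ 2) ^ (2 * β) * ‖M ξ‖ ^ 2))
    (hρ : ρ ^ 2 = ∫ ξ : EuclideanSpace ℝ (Fin d),
      Real.sqrt (1 + ‖ξ‖ ^ 2) ^ (2 * β) * ‖M ξ‖ ^ 2)
    (ξc : ℝ) (hξc0 : 0 ≤ ξc)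
    (hξc : Real.sqrt (1 + ξc ^ 2) = (ρ / δ) ^ ((1 : ℝ) / (α + β - s)))
    (Mc : EuclideanSpace ℝ (Fin d) → ℂ)
    (hMc : ∀ ξ, Mc ξ = if ‖ξ‖ < ξc then ((Real.sqrt (1 + ‖ξ‖ ^ 2) ^ α : ℝ) : ℂ) * Gδ ξ else 0) :
    Real.sqrt (∫ ξ : EuclideanSpace ℝ (Fin d), ‖M ξ - Mc ξ‖ ^ 2) ≤
      2 * ρ ^ ((α - s) / (α + β - s)) * δ ^ (β / (α + β - s)) := by
  have hκ : 0 < α + β - s := by linarith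
  have hρ0 : 0 < ρ := lt_of_lt_of_le hδ0 hδρ
  set c := Real.sqrt (1 + ξc ^ 2) with hcdef
  have hc1 : 1 ≤ c := Real.one_le_sqrt.mpr (by nlinarith)
  have hc0 : 0 < c := lt_of_lt_of_le one_pos hc1
  set a := (α - s) / (α + β - s) with hadef
  set b := β / (α + β - s) with hbdef
  -- pointwise bound
  have key : ∀ ξ : EuclideanSpace ℝ (Fin d),
      ‖M ξ - Mc ξ‖ ^ 2 ≤
        c ^ (2*(α-s)) * (Real.sqrt (1 + ‖ξ‖ ^ 2) ^ (2 * s) * ‖Gδ ξ - G ξ‖ ^ 2)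
        + c ^ (-(2*β)) * (Real.sqrt (1 + ‖ξ‖ ^ 2) ^ (2 * β) * ‖M ξ‖ ^ 2) := by
    intro ξ
    set W := Real.sqrt (1 + ‖ξ‖ ^ 2) with hWdef
    have hW1 : 1 ≤ W := Real.one_le_sqrt.mpr (by nlinarith [norm_nonneg ξ])
    have hW0 : 0 < W := lt_of_lt_of_le one_pos hW1
    by_cases hlt : ‖ξ‖ < ξc
    · have hWc : W ≤ c := Real.sqrt_le_sqrt (by nlinarith [norm_nonneg ξ])
      have hMeq : M ξ = ((W ^ α : ℝ) : ℂ) * G ξ := by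
        rw [hG ξ, ← mul_assoc, ← Complex.ofReal_mul, ← Real.rpow_add hW0]
        simp
      have hsub : M ξ - Mc ξ = ((W ^ α : ℝ) : ℂ) * (G ξ - Gδ ξ) := by
        rw [hMc ξ, if_pos hlt, hMeq]; ring
      have hnorm : ‖M ξ - Mc ξ‖ = W ^ α * ‖Gδ ξ - G ξ‖ := by
        rw [hsub, norm_mul, Complex.norm_real, Real.norm_eq_abs,
          abs_of_pos (Real.rpow_pos_of_pos hW0 α), norm_sub_rev]
      have h1 : (W ^ α) ^ 2 = W ^ (2*(α-s)) * W ^ (2*s) := by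
        rw [← Real.rpow_add hW0, ← Real.rpow_natCast (W ^ α) 2, ← Real.rpow_mul hW0.le]
        norm_num; ring_nf
      have hb1 : W ^ (2*(α-s)) ≤ c ^ (2*(α-s)) :=
        Real.rpow_le_rpow hW0.le hWc (by linarith)
      have : ‖M ξ - Mc ξ‖ ^ 2 ≤ c ^ (2*(α-s)) * (W ^ (2*s) * ‖Gδ ξ - G ξ‖ ^ 2) := by
        rw [hnorm, mul_pow, h1, mul_assoc]
        exact mul_le_mul_of_nonneg_right hb1 (by positivity)
      exact le_trans this (le_add_of_nonneg_right (by positivity))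
    · push_neg at hlt
      have hcW : c ≤ W := Real.sqrt_le_sqrt (by nlinarith)
      have hsub : M ξ - Mc ξ = M ξ := by rw [hMc ξ, if_neg (not_lt.mpr hlt), sub_zero]
      have hpow : c ^ (2*β) ≤ W ^ (2*β) :=
        Real.rpow_le_rpow hc0.le hcW (by linarith)
      have hone : 1 ≤ c ^ (-(2*β)) * W ^ (2*β) := by
        rw [Real.rpow_neg hc0.le]
        rw [inv_mul_eq_div, le_div_iff₀ (Real.rpow_pos_of_pos hc0 _), one_mul]
        exact hpow
      have : ‖M ξ - Mc ξ‖ ^ 2 ≤ c ^ (-(2*β)) * (W ^ (2*β) * ‖M ξ‖ ^ 2) := by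
        rw [hsub, ← mul_assoc]
        nlinarith [sq_nonneg (‖M ξ‖)]
      exact le_trans this (le_add_of_nonneg_left (by positivity))
  have hmono : (∫ ξ : EuclideanSpace ℝ (Fin d), ‖M ξ - Mc ξ‖ ^ 2) ≤
      ∫ ξ : EuclideanSpace ℝ (Fin d),
        (c ^ (2*(α-s)) * (Real.sqrt (1 + ‖ξ‖ ^ 2) ^ (2 * s) * ‖Gδ ξ - G ξ‖ ^ 2)
        + c ^ (-(2*β)) * (Real.sqrt (1 + ‖ξ‖ ^ 2) ^ (2 * β) * ‖M ξ‖ ^ 2)) :=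
    integral_mono_of_nonneg (Filter.Eventually.of_forall fun ξ => by positivity)
      ((hδint.const_mul _).add (hρint.const_mul _))
      (Filter.Eventually.of_forall key)
  have hval : (∫ ξ : EuclideanSpace ℝ (Fin d),
        (c ^ (2*(α-s)) * (Real.sqrt (1 + ‖ξ‖ ^ 2) ^ (2 * s) * ‖Gδ ξ - G ξ‖ ^ 2)
        + c ^ (-(2*β)) * (Real.sqrt (1 + ‖ξ‖ ^ 2) ^ (2 * β) * ‖M ξ‖ ^ 2)))
      = c ^ (2*(α-s)) * δ ^ 2 + c ^ (-(2*β)) * ρ ^ 2 := by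
    rw [integral_add (hδint.const_mul _) (hρint.const_mul _), integral_const_mul,
      integral_const_mul, ← hδ, ← hρ]
  -- rewrite powers of c
  have hρδpos : 0 < ρ / δ := div_pos hρ0 hδ0
  have hcpow : ∀ t : ℝ, c ^ t = ρ ^ (t / (α + β - s)) * δ ^ (-(t / (α + β - s))) := by
    intro t
    rw [hξc, ← Real.rpow_mul hρδpos.le, one_div_mul_eq_div,
      Real.div_rpow hρ0.le hδ0.le, Real.rpow_neg hδ0.le, div_eq_mul_inv]
  have hd2 : ∀ x : ℝ, 0 ≤ x → x ^ 2 = x ^ (2:ℝ) := by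
    intro x hx
    rw [← Real.rpow_natCast x 2]; norm_num
  have hκ0 : (α + β - s) ≠ 0 := ne_of_gt hκ
  have h1 : c ^ (2*(α-s)) * δ ^ 2 = ρ ^ (2*a) * δ ^ (2*b) := by
    rw [hcpow, hd2 δ hδ0.le, mul_assoc, ← Real.rpow_add hδ0]
    congr 2
    · simp only [hadef]; ring
    · simp only [hadef, hbdef]; field_simp [hκ0]; ring
  have h2 : c ^ (-(2*β)) * ρ ^ 2 = ρ ^ (2*a) * δ ^ (2*b) := by
    rw [hcpow, hd2 ρ hρ0.le, mul_right_comm, ← Real.rpow_add hρ0]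
    congr 2
    · simp only [hadef, hbdef]; field_simp [hκ0]; ring
    · simp only [hbdef]; ring
  have hsq : (ρ ^ a * δ ^ b) ^ 2 = ρ ^ (2*a) * δ ^ (2*b) := by
    rw [mul_pow, ← Real.rpow_natCast (ρ ^ a) 2, ← Real.rpow_natCast (δ ^ b) 2,
      ← Real.rpow_mul hρ0.le, ← Real.rpow_mul hδ0.le]
    norm_num [mul_comm]
  have hE : 0 ≤ ρ ^ (2*a) * δ ^ (2*b) := by positivity
  have hfin : (∫ ξ : EuclideanSpace ℝ (Fin d), ‖M ξ - Mc ξ‖ ^ 2) ≤ (2 * (ρ ^ a * δ ^ b)) ^ 2 := by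
    have h := hmono.trans_eq hval
    rw [h1, h2] at h
    rw [mul_pow, hsq]
    have h4 : ((2:ℝ)) ^ 2 = 4 := by norm_num
    rw [h4]
    linarith
  calc Real.sqrt (∫ ξ : EuclideanSpace ℝ (Fin d), ‖M ξ - Mc ξ‖ ^ 2)
      ≤ Real.sqrt ((2 * (ρ ^ a * δ ^ b)) ^ 2) := Real.sqrt_le_sqrt hfin
    _ = 2 * (ρ ^ a * δ ^ b) := Real.sqrt_sq (by positivity)
    _ = 2 * ρ ^ a * δ ^ b := by ring
end

section
/- Let μ be a Borel probability measure on ℝ^d with finite second moment, let a, b ∈ ℝ^d, and let S₁, …, S_J ⊆ {1, …, d} be nonempty coordinate sets with projections P_j : ℝ^d → ℝ^{|S_j|}, P_j(x) = (x_i)_{i∈S_j}. Let μ_a and μ_b be the pushforwards of μ under x ↦ x + a and x ↦ x + b. Then Σ_{j=1}^{J} W₂²(P_{j#} μ_a, P_{j#} μ_b) = Σ_{i=1}^{d} Π(i) (a_i − b_i)², where Π(i) := #{ j : i ∈ S_j } is the number of projections containing coordinate i. In particular, if every coordinate is contained in at least one S_j, this functional is a strictly positive-definite quadratic form in a − b (hence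 globally convex with a unique minimizer at a = b). -/
open MeasureTheory
open scoped ENNReal RealInnerProductSpace

/-!
Two translates of one measure are at squared `W₂` distance exactly the squared distance of the
translation vectors: the coupling `x ↦ (x + u, x + w)` costs `‖u - w‖²`, and by Jensen every
coupling costs at least the squared norm of its mean displacement, which is the difference
`u - w` of the barycenters. A coordinate projection is linear, so it maps translates of `μ` to
translates of its image, and summing the projected costs `∑_{i ∈ S_j} (a_i - b_i)²` over `j`
counts coordinate `i` exactly `Π(i)` times.
-/

/-- The squared quadratic Wasserstein distance `W₂²(μ, ν)`: the infimum, over all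
couplings `π` of `μ` and `ν` (Borel measures on the product space whose first and second
marginals are `μ` and `ν` respectively), of the transport cost `∫ ‖x - y‖² dπ(x, y)`. -/
noncomputable def W2sq {E : Type*} [NormedAddCommGroup E] [MeasurableSpace E]
    (μ ν : Measure E) : ℝ≥0∞ :=
  ⨅ (π : Measure (E × E)) (_ : π.map Prod.fst = μ ∧ π.map Prod.snd = ν),
    ∫⁻ p, (‖p.1 - p.2‖₊ : ℝ≥0∞) ^ 2 ∂π

section Moments

variable {α F : Type*} [MeasurableSpace α] {μ : Measure α} [NormedAddCommGroup F] {f : α → F}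

lemma sq_lintegral_enorm_le_lintegral_enorm_sq [IsProbabilityMeasure μ]
    (hf : AEStronglyMeasurable f μ) : (∫⁻ x, ‖f x‖ₑ ∂μ) ^ 2 ≤ ∫⁻ x, ‖f x‖ₑ ^ 2 ∂μ := by
  have h := eLpNorm_nnreal_pow_eq_lintegral (f := f) (μ := μ) (p := 2) two_ne_zero
  simp only [NNReal.coe_ofNat, ENNReal.rpow_ofNat] at h
  rw [← eLpNorm_one_eq_lintegral_enorm, ← h]
  gcongr
  exact eLpNorm_le_eLpNorm_of_exponent_le one_le_two hf

lemma integrable_of_lintegral_enorm_sq_lt_top [IsFiniteMeasure μ]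
    (hf : AEStronglyMeasurable f μ) (h : ∫⁻ x, ‖f x‖ₑ ^ 2 ∂μ < ∞) : Integrable f μ :=
  MemLp.integrable one_le_two ⟨hf, (eLpNorm_lt_top_iff_lintegral_rpow_enorm_lt_top two_ne_zero
    ENNReal.ofNat_ne_top).2 (by simpa using h)⟩

end Moments

section Wasserstein

variable {E : Type*} [NormedAddCommGroup E] [MeasurableSpace E] [BorelSpace E]
  [SecondCountableTopology E]

lemma integral_map_add_const [NormedSpace ℝ E] [CompleteSpace E] (ν : Measure E)
    [IsProbabilityMeasure ν] (hν : Integrable id ν) (u : E) :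
    ∫ x, x ∂(ν.map (· + u)) = ∫ x, x ∂ν + u := by
  rw [integral_map (f := fun x => x) (measurable_add_const u).aemeasurable (by fun_prop),
    integral_add (f := fun x => x) hν (integrable_const u), integral_const]
  simp

lemma ofReal_norm_sub_integral_sq_le_W2sq [NormedSpace ℝ E] {μ ν : Measure E}
    [IsProbabilityMeasure μ]
    (hμ : Integrable id μ) (hν : Integrable id ν) :
    ENNReal.ofReal (‖∫ x, x ∂μ - ∫ x, x ∂ν‖ ^ 2) ≤ W2sq μ ν := by
  refine le_iInf₂ fun π ⟨h₁, h₂⟩ => ?_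
  have : IsProbabilityMeasure π := by
    rw [← Measure.isProbabilityMeasure_map_iff measurable_fst.aemeasurable, h₁]; infer_instance
  have hfst : Integrable Prod.fst π := by
    rw [← h₁] at hμ
    exact (integrable_map_measure aestronglyMeasurable_id measurable_fst.aemeasurable).1 hμ
  have hsnd : Integrable Prod.snd π := by
    rw [← h₂] at hν
    exact (integrable_map_measure aestronglyMeasurable_id measurable_snd.aemeasurable).1 hν
  have hmean : ∫ p, p.1 - p.2 ∂π = ∫ x, x ∂μ - ∫ x, x ∂ν := by
    rw [integral_sub hfst hsnd, ← h₁, ← h₂,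
      integral_map (f := fun x => x) measurable_fst.aemeasurable (by fun_prop),
      integral_map (f := fun x => x) measurable_snd.aemeasurable (by fun_prop)]
  calc ENNReal.ofReal (‖∫ x, x ∂μ - ∫ x, x ∂ν‖ ^ 2) = ‖∫ p, p.1 - p.2 ∂π‖ₑ ^ 2 := by
        rw [hmean, ENNReal.ofReal_pow (norm_nonneg _), ofReal_norm]
    _ ≤ (∫⁻ p, ‖p.1 - p.2‖ₑ ∂π) ^ 2 := by gcongr; exact enorm_integral_le_lintegral_enorm _
    _ ≤ ∫⁻ p, ‖p.1 - p.2‖ₑ ^ 2 ∂π :=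
        sq_lintegral_enorm_le_lintegral_enorm_sq (by fun_prop)

lemma W2sq_map_add_const_le (ν : Measure E) [IsProbabilityMeasure ν] (u w : E) :
    W2sq (ν.map (· + u)) (ν.map (· + w)) ≤ ENNReal.ofReal (‖u - w‖ ^ 2) := by
  have hm : Measurable fun x : E => (x + u, x + w) := by fun_prop
  refine iInf₂_le_of_le (ν.map fun x => (x + u, x + w)) ⟨?_, ?_⟩ ?_
  · rw [Measure.map_map measurable_fst hm]; rfl
  · rw [Measure.map_map measurable_snd hm]; rfl
  · rw [lintegral_map (by fun_prop) hm]
    simp only [add_sub_add_left_eq_sub, lintegral_const, measure_univ, mul_one]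
    rw [ENNReal.ofReal_pow (norm_nonneg _), ofReal_norm, enorm_eq_nnnorm]

lemma W2sq_map_add_const [NormedSpace ℝ E] [CompleteSpace E] (ν : Measure E)
    [IsProbabilityMeasure ν] (hν : Integrable id ν) (u w : E) :
    W2sq (ν.map (· + u)) (ν.map (· + w)) = ENNReal.ofReal (‖u - w‖ ^ 2) := by
  refine le_antisymm (W2sq_map_add_const_le ν u w) ?_
  have : IsProbabilityMeasure (ν.map (· + u)) :=
    Measure.isProbabilityMeasure_map (measurable_add_const u).aemeasurable
  have hint (c : E) : Integrable id (ν.map (· + c)) :=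
    (integrable_map_measure aestronglyMeasurable_id (measurable_add_const c).aemeasurable).2
      (hν.add (integrable_const c))
  simpa [integral_map_add_const ν hν] using ofReal_norm_sub_integral_sq_le_W2sq (hint u) (hint w)

end Wasserstein

lemma W2sq_map_map_add_const {E F : Type*} [NormedAddCommGroup E] [NormedSpace ℝ E]
    [MeasurableSpace E] [BorelSpace E] [NormedAddCommGroup F] [NormedSpace ℝ F] [CompleteSpace F]
    [MeasurableSpace F] [BorelSpace F] [SecondCountableTopology F] (L : E →L[ℝ] F)
    (ν : Measure E) [IsProbabilityMeasure ν] (hν : Integrable id ν) (u w : E) :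
    W2sq ((ν.map (· + u)).map L) ((ν.map (· + w)).map L) = ENNReal.ofReal (‖L u - L w‖ ^ 2) := by
  have hmap (c : E) : (ν.map (· + c)).map L = (ν.map L).map (· + L c) := by
    rw [Measure.map_map L.measurable (measurable_add_const c),
      Measure.map_map (measurable_add_const _) L.measurable]
    congr 1
    ext x
    simp
  have : IsProbabilityMeasure (ν.map L) :=
    Measure.isProbabilityMeasure_map L.measurable.aemeasurable
  rw [hmap, hmap, W2sq_map_add_const _ ((integrable_map_measure aestronglyMeasurable_id
    L.measurable.aemeasurable).2 (L.integrable_comp hν))]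

section CoordinateProjection

variable {ι : Type*} {S : Finset ι} {P : EuclideanSpace ℝ ι → EuclideanSpace ℝ {i // i ∈ S}}

lemma isLinearMap_of_forall_apply_eq (hP : ∀ x i, P x i = x i.1) : IsLinearMap ℝ P :=
  ⟨fun x y => by ext i; simp [hP], fun c x => by ext i; simp [hP]⟩

lemma norm_sq_of_forall_apply_eq (hP : ∀ x i, P x i = x i.1) (x : EuclideanSpace ℝ ι) :
    ‖P x‖ ^ 2 = ∑ i ∈ S, x i ^ 2 := by
  rw [EuclideanSpace.norm_sq_eq, ← S.sum_coe_sort]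
  simp [hP]

end CoordinateProjection

lemma Finset.sum_sum_mem_eq_sum_card_smul {ι κ M : Type*} [Fintype ι] [Fintype κ]
    [DecidableEq ι] [AddCommMonoid M] (S : κ → Finset ι) (f : ι → M) :
    ∑ j, ∑ i ∈ S j, f i = ∑ i, (univ.filter fun j => i ∈ S j).card • f i := by
  rw [Finset.sum_comm' (t' := univ) (s' := fun i => univ.filter fun j => i ∈ S j) (by simp)]
  simp

lemma ofReal_sum_mul_sq_eq_zero_iff {ι : Type*} [Fintype ι] {c v : ι → ℝ}
    (hc : ∀ i, 0 < c i) : ENNReal.ofReal (∑ i, c i * v i ^ 2) = 0 ↔ ∀ i, v i = 0 := by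
  have hnonneg (i : ι) (_ : i ∈ Finset.univ) : 0 ≤ c i * v i ^ 2 := by have := hc i; positivity
  rw [ENNReal.ofReal_eq_zero, (Finset.sum_nonneg hnonneg).ge_iff_eq',
    Finset.sum_eq_zero_iff_of_nonneg hnonneg]
  simp [(hc _).ne']

theorem W2sq_sum_projected_translates_general
    {d J : ℕ} (μ : Measure (EuclideanSpace ℝ (Fin d)))
    [IsProbabilityMeasure μ]
    (hmom : ∫⁻ x, (‖x‖₊ : ℝ≥0∞) ^ 2 ∂μ < ⊤)
    (a b : EuclideanSpace ℝ (Fin d))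
    (S : Fin J → Finset (Fin d))
    (P : ∀ j, EuclideanSpace ℝ (Fin d) → EuclideanSpace ℝ {i // i ∈ S j})
    (hP : ∀ j x i, P j x i = x i.1) :
    (∑ j, W2sq ((μ.map (· + a)).map (P j)) ((μ.map (· + b)).map (P j)) =
        ENNReal.ofReal (∑ i, ((Finset.univ.filter fun j => i ∈ S j).card : ℝ) * (a i - b i) ^ 2)) ∧
      ((∀ i, ∃ j, i ∈ S j) →
        ((∑ j, W2sq ((μ.map (· + a)).map (P j)) ((μ.map (· + b)).map (P j)) = 0) ↔ a = b)) := by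
  have hμ : Integrable id μ := integrable_of_lintegral_enorm_sq_lt_top (by fun_prop) hmom
  have hterm (j : Fin J) : W2sq ((μ.map (· + a)).map (P j)) ((μ.map (· + b)).map (P j)) =
      ENNReal.ofReal (∑ i ∈ S j, (a i - b i) ^ 2) := by
    have hlin := isLinearMap_of_forall_apply_eq (hP j)
    rw [show P j = (hlin.mk' _).toContinuousLinearMap from rfl, W2sq_map_map_add_const _ μ hμ]
    simp [← hlin.map_sub, norm_sq_of_forall_apply_eq (hP j)]
  have hsum : ∑ j, W2sq ((μ.map (· + a)).map (P j)) ((μ.map (· + b)).map (P j)) =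
      ENNReal.ofReal (∑ i, ((Finset.univ.filter fun j => i ∈ S j).card : ℝ) * (a i - b i) ^ 2) := by
    rw [Finset.sum_congr rfl fun j _ => hterm j,
      ← ENNReal.ofReal_sum_of_nonneg fun j _ => by positivity,
      Finset.sum_sum_mem_eq_sum_card_smul]
    simp only [nsmul_eq_mul]
  refine ⟨hsum, fun hcover => ?_⟩
  have hcard (i : Fin d) : 0 < ((Finset.univ.filter fun j => i ∈ S j).card : ℝ) := by
    obtain ⟨j, hj⟩ := hcover i
    exact Nat.cast_pos.2 (Finset.card_pos.2 ⟨j, by simpa using hj⟩)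
  rw [hsum, ofReal_sum_mul_sq_eq_zero_iff hcard]
  simp [sub_eq_zero, PiLp.ext_iff]

/-- **Locating an object from projections is convex under `W₂`.**  For projections
`P_j` onto nonempty coordinate sets `S_j`,
`Σ_j W₂²(P_{j#} μ_a, P_{j#} μ_b) = Σ_i Π(i) (a_i - b_i)²` where `Π(i)` is the number of
`j` with `i ∈ S_j`; in particular, if every coordinate is covered by some `S_j`, this
quantity is a strictly positive-definite quadratic form in `a - b`: it vanishes iff
`a = b`. -/
theorem W2sq_sum_projected_translates
    {d J : ℕ} (hd : 1 ≤ d) (μ : Measure (EuclideanSpace ℝ (Fin d)))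
    [IsProbabilityMeasure μ]
    (hmom : ∫⁻ x, (‖x‖₊ : ℝ≥0∞) ^ 2 ∂μ < ⊤)
    (a b : EuclideanSpace ℝ (Fin d))
    (S : Fin J → Finset (Fin d)) (hS : ∀ j, (S j).Nonempty)
    (P : ∀ j, EuclideanSpace ℝ (Fin d) → EuclideanSpace ℝ {i // i ∈ S j})
    (hP : ∀ j x i, P j x i = x i.1) :
    (∑ j, W2sq ((μ.map (· + a)).map (P j)) ((μ.map (· + b)).map (P j)) =
        ENNReal.ofReal (∑ i, ((Finset.univ.filter fun j => i ∈ S j).card : ℝ) * (a i - b i) ^ 2)) ∧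
      ((∀ i, ∃ j, i ∈ S j) →
        ((∑ j, W2sq ((μ.map (· + a)).map (P j)) ((μ.map (· + b)).map (P j)) = 0) ↔ a = b)) :=
  W2sq_sum_projected_translates_general μ hmom a b S P hP
end
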